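/- Let E/K be an extension of fields and G an ordered abelian group. Then, inside E((G)), one has K((G)) ∩ E(G) = K(G); that is, a power series with all coefficients in K that equals (the power series expansion of) a rational function over E is a rational function over K. -/

import Mathlib

noncomputable section

open HahnSeries Classical

/-- A field is real closed: `-1` is not a square, every element or its negative is a square,
and every polynomial of odd degree has a root. -/
def IsRealClosed' (F : Type*) [Field F] : Prop :=
  (¬ ∃ x : F, x ^ 2 = -1) ∧ (∀ x : F, ∃ y : F, y ^ 2 = x ∨ y ^ 2 = -x) ∧
    ∀ p : Polynomial F, Odd p.natDegree → ∃ x : F, p.eval x = 0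

/-- Applying a map `p : F → F'` (e.g. the residue map of a place) to each coefficient
of a generalized power series; coefficients equal to `0` are sent to `0`. -/
def coeffMap {G : Type*} [PartialOrder G] {F F' : Type*} [Zero F] [Zero F']
    (p : F → F') (f : HahnSeries G F) : HahnSeries G F' where
  coeff g := if f.coeff g = 0 then 0 else p (f.coeff g)
  isPWO_support' := f.isPWO_support'.mono (fun g hg h => by
    simp only [Function.mem_support, h, if_pos] at hg
    exact hg rfl)

variable (F : Type*) [Field F] (G : Type*) [AddCommGroup G] [LinearOrder G] [IsOrderedAddMonoid G]

/-- The minimal support valuation on the field of generalized power series `F((G))`,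
with value `⊤` at `0`. -/
def vmin (f : HahnSeries G F) : WithTop G := f.orderTop

/-- The set of generalized power series all of whose coefficients lie in `S`. -/
def coeffIn (S : Set F) : Set (HahnSeries G F) := {f | ∀ g : G, f.coeff g ∈ S}

/-- For a subfield `E ⊆ F`, the subfield `E(G)` of `F((G))`: the fraction field of the
group ring `E[G]`, i.e. the subfield generated by the monomials with coefficients in `E`. -/
def ratSubfieldOver (E : Subfield F) : Subfield (HahnSeries G F) :=
  Subfield.closure {x | ∃ (g : G) (a : F), a ∈ E ∧ x = HahnSeries.single g a}

/-- The subfield `F(G)` of rational functions inside `F((G))`. -/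
def ratSubfield : Subfield (HahnSeries G F) := ratSubfieldOver F G ⊤

/-- The valuation ideal `I_L` of a subset `L ⊆ F((G))` (w.r.t. the minimal support
valuation). -/
def valIdeal (L : Set (HahnSeries G F)) : Set (HahnSeries G F) :=
  {f ∈ L | 0 < vmin F G f}

/-- The set `U_L = 1 + I_L` of 1-units of a subset `L ⊆ F((G))`. -/
def oneUnits (L : Set (HahnSeries G F)) : Set (HahnSeries G F) :=
  {f ∈ L | 0 < vmin F G (1 - f)}

variable {F G} in
/-- The `K`-linear combination of elements of `F((G))` encoded by a finitely supported
function `c` with values in the subfield `K`. -/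
def lincomb {K : Subfield F} (c : HahnSeries G F →₀ K) : HahnSeries G F :=
  c.sum fun b r => (r : F) • b

/-- `B` is a `K`-valuation basis of the (`K`-subspace) subset `L` of `F((G))`:
it is contained in `L`, every element of `L` is a unique finite `K`-linear combination
of elements of `B`, and every such combination realizes as its value the minimum of the
values of the basis elements occurring in it. -/
def IsValuationBasis (K : Subfield F) (L B : Set (HahnSeries G F)) : Prop :=
  B ⊆ L ∧
    (∀ f ∈ L, ∃! c : HahnSeries G F →₀ K, ↑c.support ⊆ B ∧ f = lincomb c) ∧
    ∀ c : HahnSeries G F →₀ K, ↑c.support ⊆ B →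
      vmin F G (lincomb c) = c.support.inf fun b => vmin F G b

/-- `f = ∏ b^(c b)` where the exponents `c b` are rational numbers: there is a common
positive denominator `d` such that `f ^ d = ∏ b ^ (c b * d)` with integer exponents. -/
def qpowCombo (c : HahnSeries G F →₀ ℚ) (f : HahnSeries G F) : Prop :=
  ∃ d : ℕ, 0 < d ∧ (∀ b ∈ c.support, ((c b) * d).den = 1) ∧
    f ^ d = ∏ b ∈ c.support, b ^ ((c b) * d).num

/-- `B` is a `ℚ`-valuation basis of a subset `L` of the group of `1`-units of `F((G))`,
with respect to the valuation `w f = v_min (1 - f)`, all operations being multiplicative. -/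
def IsMultValuationBasis (L B : Set (HahnSeries G F)) : Prop :=
  B ⊆ L ∧
    (∀ f ∈ L, ∃! c : HahnSeries G F →₀ ℚ, ↑c.support ⊆ B ∧ qpowCombo F G c f) ∧
    ∀ c : HahnSeries G F →₀ ℚ, ↑c.support ⊆ B → ∀ f, qpowCombo F G c f →
      vmin F G (1 - f) = c.support.inf fun b => vmin F G (1 - b)

variable {F} in
/-- An `E`-rational place of `E'` (both subsets of an ambient field `F`): a valuation
subring `dom` of `E'` containing `E`, together with a residue map `res` which is a ring
homomorphism on `dom`, restricts to the identity on `E`, has image in `E` (so the residue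
field is `E`), and whose kernel consists exactly of the nonunits of `dom`. -/
structure RatPlace (E E' : Set F) where
  dom : Subring F
  dom_le : (dom : Set F) ⊆ E'
  res : F → F
  res_one : res 1 = 1
  res_add : ∀ x ∈ dom, ∀ y ∈ dom, res (x + y) = res x + res y
  res_mul : ∀ x ∈ dom, ∀ y ∈ dom, res (x * y) = res x * res y
  res_mem : ∀ x ∈ dom, res x ∈ E
  base_subset : E ⊆ dom
  res_id : ∀ x ∈ E, res x = x
  vring : ∀ x ∈ E', x ∉ dom → x⁻¹ ∈ dom
  res_unit : ∀ x ∈ dom, res x ≠ 0 → x⁻¹ ∈ dom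
  res_nonunit : ∀ x ∈ dom, x ≠ 0 → x⁻¹ ∈ dom → res x ≠ 0

variable {F} in
/-- `{α}` is a transcendence basis of `E'` over `E` (inside the ambient field `F`):
`α ∈ E'` is transcendental over `E` and every element of `E'` is algebraic over `E(α)`. -/
def IsSingleTransBasis (E E' : Subfield F) (α : F) : Prop :=
  α ∈ E' ∧ Transcendental E α ∧
    ∀ x ∈ E', IsAlgebraic (Subfield.closure ((E : Set F) ∪ {α})) x

/-- The transcendence degree reduction property over `K` (for `F` algebraically closed)
of a subset `L` with `F(G) ⊆ L ⊆ F((G))`: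
1. for each countable intermediate field `K ≤ E`, `E((G)) ∩ L` is countable and `L` is
   the union of these sets;
2. for intermediate algebraically closed fields `K ≤ E < E'` with `E'/E` of transcendence
   degree 1, any finitely many elements of `E'((G)) ∩ L` have all coefficients in the
   valuation ring of some `E`-rational place `P` of `E'`, with images under `φ_P` in
   `E((G)) ∩ L`;
3. moreover, for any fixed transcendence basis `{α}` of `E'/E`, the place `P` may be
   chosen to send `α` and `α⁻¹` into `K`. -/
def SatisfiesTDRPAC (K : Subfield F) (L : Set (HahnSeries G F)) : Prop :=
  (∀ E : Subfield F, K ≤ E → (E : Set F).Countable →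
      (coeffIn F G ↑E ∩ L).Countable) ∧
  (∀ f ∈ L, ∃ E : Subfield F, K ≤ E ∧ (E : Set F).Countable ∧ f ∈ coeffIn F G ↑E) ∧
  (∀ E E' : Subfield F, K ≤ E → E < E' → IsAlgClosed E → IsAlgClosed E' →
      (∃ α : F, IsSingleTransBasis E E' α) →
      ∀ (n : ℕ) (s : Fin n → HahnSeries G F),
        (∀ m, s m ∈ coeffIn F G ↑E' ∩ L) →
        ∃ P : RatPlace (E : Set F) (E' : Set F),
          (∀ m, s m ∈ coeffIn F G ↑P.dom) ∧
          ∀ m, coeffMap P.res (s m) ∈ coeffIn F G ↑E ∩ L) ∧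
  (∀ E E' : Subfield F, K ≤ E → E < E' → IsAlgClosed E → IsAlgClosed E' →
      ∀ α : F, IsSingleTransBasis E E' α →
      ∀ (n : ℕ) (s : Fin n → HahnSeries G F),
        (∀ m, s m ∈ coeffIn F G ↑E' ∩ L) →
        ∃ P : RatPlace (E : Set F) (E' : Set F),
          (∀ m, s m ∈ coeffIn F G ↑P.dom) ∧
          (∀ m, coeffMap P.res (s m) ∈ coeffIn F G ↑E ∩ L) ∧
          α ∈ P.dom ∧ α⁻¹ ∈ P.dom ∧ P.res α ∈ K ∧ P.res α⁻¹ ∈ K)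

variable {F} in
/-- The set `L ⊕ √-1·L` inside `F'((G))`, where `φ : F →+* F'` identifies `F` with a
subfield of `F'` and `i ∈ F'` is a square root of `-1`. -/
def complexifySet {F' : Type*} [Field F'] (φ : F →+* F') (i : F')
    (L : Set (HahnSeries G F)) : Set (HahnSeries G F') :=
  {z | ∃ x ∈ L, ∃ y ∈ L,
    z = coeffMap (⇑φ) x + HahnSeries.single (0 : G) i * coeffMap (⇑φ) y}

/-- The transcendence degree reduction property over `K` of `L ⊆ F((G))`, for `F`
algebraically closed or real closed.  In the real closed case it is the requirement that
`L ⊕ √-1·L`, viewed inside `F^a((G))` where `F^a = F(√-1)` is the algebraic closure of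
`F`, satisfies the TDRP over (the image of) `K`. -/
def SatisfiesTDRP (K : Subfield F) (L : Set (HahnSeries G F)) : Prop :=
  (IsAlgClosed F ∧ SatisfiesTDRPAC F G K L) ∨
  (IsRealClosed' F ∧ ∃ i : AlgebraicClosure F, i ^ 2 = -1 ∧
    SatisfiesTDRPAC (AlgebraicClosure F) G
      (K.map (algebraMap F (AlgebraicClosure F)))
      (complexifySet G (algebraMap F (AlgebraicClosure F)) i L))

/-- A transcendence basis `{α_λ}_{λ ∈ I}` of `F` over a subfield `K`: the family is
algebraically independent over `K` and `F` is algebraic over the subfield generated by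
`K` and the `α_λ`. -/
def IsTransBasisFamily {F : Type*} [Field F] (K : Subfield F) {I : Type*} (α : I → F) :
    Prop :=
  AlgebraicIndependent K α ∧
    ∀ x : F, IsAlgebraic (Subfield.closure ((K : Set F) ∪ Set.range α)) x

/-- For a subset `S ⊆ I`, the field `K_S`: the relative algebraic closure in `F` of the
subfield generated by `K` and the transcendence basis elements `α_λ`, `λ ∈ S`. -/
def KXset {F : Type*} [Field F] (K : Subfield F) {I : Type*} (α : I → F) (S : Set I) :
    Set F :=
  {x | IsAlgebraic (Subfield.closure ((K : Set F) ∪ α '' S)) x}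

/-!
If `f ∈ K((G))` is a quotient `p / q` of finitely supported series `p, q ∈ E[G]` with `q ≠ 0`,
choose a `K`-linear map `ℓ : E → K` that does not vanish on some coefficient of `q`.
Applying `ℓ` coefficientwise commutes with multiplication by series with coefficients in `K`,
so `q * f = p` gives `ℓ(q) * f = ℓ(p)` with `ℓ(q) ≠ 0`; hence `f = ℓ(p) / ℓ(q) ∈ K(G)`.
-/

namespace HahnSeries

section GroupRing

theorem eq_sum_single_of_support_finite {Γ R : Type*} [PartialOrder Γ] [AddCommMonoid R]
    {f : HahnSeries Γ R} (hf : f.support.Finite) :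
    f = ∑ g ∈ hf.toFinset, single g (f.coeff g) := by
  ext g
  rw [coeff_sum, Finset.sum_eq_single g (fun _ _ hne => coeff_single_of_ne hne.symm)
    (fun hg => by simpa using hg), coeff_single_same]

variable {Γ R σ : Type*} [PartialOrder Γ] [AddCommMonoid Γ] [IsOrderedCancelAddMonoid Γ] [Ring R]
  [SetLike σ R] [SubringClass σ R]

/-- The group ring `S[Γ]`, as the finitely supported series inside `R⟦Γ⟧`. -/
def groupRing (S : σ) : Subring (HahnSeries Γ R) where
  carrier := {f | f.support.Finite ∧ ∀ g, f.coeff g ∈ S}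
  zero_mem' := ⟨by simp, fun _ => zero_mem S⟩
  one_mem' := ⟨(Set.finite_singleton 0).subset support_single_subset, fun g => by
    rw [← single_zero_one, coeff_single]
    split_ifs
    exacts [one_mem S, zero_mem S]⟩
  add_mem' ha hb := ⟨(ha.1.union hb.1).subset (support_add_subset ..),
    fun g => add_mem (ha.2 g) (hb.2 g)⟩
  neg_mem' ha := ⟨by rw [support_neg]; exact ha.1, fun g => neg_mem (ha.2 g)⟩
  mul_mem' ha hb := ⟨(ha.1.add hb.1).subset support_mul_subset,
    fun _ => sum_mem fun ij _ => mul_mem (ha.2 ij.1) (hb.2 ij.2)⟩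

theorem closure_monomials (S : σ) :
    Subring.closure {x : HahnSeries Γ R | ∃ (g : Γ) (a : R), a ∈ S ∧ x = single g a} =
      groupRing S := by
  refine le_antisymm (Subring.closure_le.2 ?_) fun f hf => ?_
  · rintro _ ⟨g, a, ha, rfl⟩
    refine ⟨(Set.finite_singleton g).subset support_single_subset, fun g' => ?_⟩
    rw [coeff_single]
    split_ifs
    exacts [ha, zero_mem S]
  · rw [eq_sum_single_of_support_finite hf.1]
    exact sum_mem fun g _ => Subring.subset_closure ⟨g, f.coeff g, hf.2 g, rfl⟩

theorem map_mem_groupRing {S : σ} {Φ : Type*} [FunLike Φ R R] [ZeroHomClass Φ R R]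
    (ℓ : Φ) (hℓ : ∀ a, ℓ a ∈ S) {f : HahnSeries Γ R} (hf : f.support.Finite) :
    f.map ℓ ∈ groupRing S :=
  ⟨hf.subset (support_map_subset f (ℓ : ZeroHom R R)), fun _ => hℓ _⟩

end GroupRing

theorem map_linearMap_mul {Γ R A : Type*} [PartialOrder Γ] [AddCommMonoid Γ]
    [IsOrderedCancelAddMonoid Γ] [CommSemiring R] [Semiring A] [Algebra R A]
    (ℓ : A →ₗ[R] A) (h x : HahnSeries Γ A) (hx : ∀ g, x.coeff g ∈ Set.range (algebraMap R A)) :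
    (h * x).map ℓ = h.map ℓ * x := by
  ext g
  rw [map_coeff, coeff_mul, coeff_mul_left' (x := h.map ℓ) h.isPWO_support
    (Function.support_comp_subset (map_zero ℓ) _), map_sum]
  refine Finset.sum_congr rfl fun ij _ => ?_
  obtain ⟨r, hr⟩ := hx ij.2
  rw [← hr, ← Algebra.commutes, ← Algebra.smul_def, map_smul, Algebra.smul_def,
    Algebra.commutes, map_coeff]

def mapRingHom {Γ R S : Type*} [PartialOrder Γ] [AddCommMonoid Γ] [IsOrderedCancelAddMonoid Γ]
    [Semiring R] [Semiring S] (f : R →+* S) : HahnSeries Γ R →+* HahnSeries Γ S where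
  toFun x := x.map f
  map_one' := HahnSeries.map_one f.toMonoidWithZeroHom
  map_mul' _ _ := HahnSeries.map_mul f.toNonUnitalRingHom
  map_zero' := HahnSeries.map_zero f.toAddMonoidHom.toZeroHom
  map_add' _ _ := HahnSeries.map_add f.toAddMonoidHom

@[simp]
theorem coeff_mapRingHom {Γ R S : Type*} [PartialOrder Γ] [AddCommMonoid Γ]
    [IsOrderedCancelAddMonoid Γ] [Semiring R] [Semiring S] (f : R →+* S) (x : HahnSeries Γ R)
    (g : Γ) : (mapRingHom f x).coeff g = f (x.coeff g) :=
  rfl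

end HahnSeries

theorem ratSubfieldOver_le_ratSubfield (K : Subfield F) :
    ratSubfieldOver F G K ≤ ratSubfield F G :=
  Subfield.closure_mono fun _ ⟨g, a, _, hx⟩ => ⟨g, a, trivial, hx⟩

theorem ratSubfieldOver_subset_coeffIn (K : Subfield F) :
    (ratSubfieldOver F G K : Set (HahnSeries G F)) ⊆ coeffIn F G K := by
  have hle : ratSubfieldOver F G K ≤ (mapRingHom K.subtype).fieldRange := by
    refine Subfield.closure_le.2 ?_
    rintro _ ⟨g, a, ha, rfl⟩
    refine ⟨single g ⟨a, ha⟩, HahnSeries.ext <| funext fun g' => ?_⟩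
    by_cases hg : g' = g <;> simp [hg]
  rintro f hf g
  obtain ⟨f', rfl⟩ := hle hf
  exact (f'.coeff g).2

theorem Subfield.exists_linearMap_mem_ne_zero {L : Type*} [Field L] (K : Subfield L) {a : L}
    (ha : a ≠ 0) : ∃ ℓ : L →ₗ[K] L, (∀ b, ℓ b ∈ K) ∧ ℓ a ≠ 0 := by
  obtain ⟨φ, hφ⟩ := Module.Projective.exists_dual_ne_zero K ha
  exact ⟨Algebra.linearMap K L ∘ₗ φ, fun b => (φ b).2, fun h => hφ (Subtype.ext h)⟩

theorem coeffIn_inter_ratSubfield_subset (K : Subfield F) :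
    coeffIn F G K ∩ ratSubfield F G ⊆ ratSubfieldOver F G K := by
  rintro f ⟨hfK, hf⟩
  obtain ⟨p, hp, q, hq, rfl⟩ := Subfield.mem_closure_iff.1 hf
  rw [closure_monomials] at hp hq
  obtain rfl | hq0 := eq_or_ne q 0
  · rw [div_zero]; exact zero_mem _
  obtain ⟨g, hg⟩ := support_nonempty_iff.2 hq0
  obtain ⟨ℓ, hℓK, hℓ⟩ := K.exists_linearMap_mem_ne_zero hg
  have hℓq : q.map ℓ ≠ 0 := fun h => hℓ (congrArg (coeff · g) h)
  -- applying `ℓ` to the coefficients of `q * (p / q) = p` turns it into `ℓ(q) * (p / q) = ℓ(p)`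
  have hfrac : p / q = p.map ℓ / q.map ℓ := by
    rw [eq_div_iff hℓq, mul_comm, ← map_linearMap_mul ℓ q _ (fun g => ⟨⟨_, hfK g⟩, rfl⟩),
      mul_div_cancel₀ p hq0]
  have hgroupRing : groupRing K ≤ (ratSubfieldOver F G K).toSubring := by
    rw [← closure_monomials]
    exact Subfield.subring_closure_le _
  rw [hfrac, SetLike.mem_coe]
  exact div_mem (hgroupRing (map_mem_groupRing ℓ hℓK hp.1))
    (hgroupRing (map_mem_groupRing ℓ hℓK hq.1))

/-- For a field extension `E/K` and an ordered abelian group `G`, inside `E((G))` one has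
`K((G)) ∩ E(G) = K(G)`. -/
theorem coeff_field_inter_rational
    (E : Type*) [Field E] (K : Subfield E)
    (G : Type*) [AddCommGroup G] [LinearOrder G] [IsOrderedAddMonoid G] :
    coeffIn E G ↑K ∩ ↑(ratSubfield E G) = (ratSubfieldOver E G K : Set (HahnSeries G E)) :=
  (coeffIn_inter_ratSubfield_subset E G K).antisymm fun _ hf =>
    ⟨ratSubfieldOver_subset_coeffIn E G K hf, ratSubfieldOver_le_ratSubfield E G K hf⟩
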